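/- arXiv:2306.10154 — 4 statements merged into one kernel-verified Lean document; each statement's English description precedes it below -/
import Mathlib

section
/- For every integer k ≥ 1, let g_k = p^A(k|1 / k+1), a Frobenius type-A seaweed on k+1 vertices. Then the multiset { w(P_{i,k+1}(g_k)) : 1 ≤ i ≤ k+1 } is equal to the multiset {0, 1, …, k}, each value occurring exactly once. -/
/-!
The oriented meander of `p^A(k|1 / k+1)` is a single directed path ending at `v_{k+1}`: from
`v_i` with `2i ≤ k+1` the bottom edge leads forward to `v_{k+2-i}`, and from any other
`v_i ≠ v_{k+1}` the top edge leads forward to `v_{k+1-i}`. Hence `w(P_{i,k+1})` is the distance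
from `v_i` to `v_{k+1}` along this path, and these distances are exactly `0, 1, …, k`.
-/

namespace Seaweed

/-- Positions `i` and `j` (1-indexed) are joined by an arc of the composition `c`:
they lie in the same block of `c` and are placed symmetrically within it. -/
def blockPair (c : List ℕ) (i j : ℕ) : Prop :=
  ∃ k, k < c.length ∧ (c.take k).sum < i ∧ (c.take k).sum < j ∧
    i + j = 2 * (c.take k).sum + c.getD k 0 + 1 ∧ i ≠ j

lemma blockPair_symm {c : List ℕ} {i j : ℕ} (h : blockPair c i j) : blockPair c j i := by
  obtain ⟨k, hk, hi, hj, hsum, hne⟩ := h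
  exact ⟨k, hk, hj, hi, by omega, hne.symm⟩

/-- The meander `M(a|b)` of the pair of compositions `(a, b)`, as a simple graph on `ℕ`
(positions `1, …, a.sum` carry the meander; all other naturals are isolated).
Top edges come from `a`, bottom edges from `b`. -/
def meander (a b : List ℕ) : SimpleGraph ℕ where
  Adj i j := blockPair a i j ∨ blockPair b i j
  symm := ⟨fun _ _ h => h.imp blockPair_symm blockPair_symm⟩
  loopless := ⟨by
    rintro i (⟨k, _, _, _, _, hne⟩ | ⟨k, _, _, _, _, hne⟩) <;> exact hne rfl⟩

/-- The directed-edge relation of the oriented meander: top edges are oriented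
right-to-left, bottom edges left-to-right. -/
def dirEdge (a b : List ℕ) (x y : ℕ) : Prop :=
  (blockPair a x y ∧ y < x) ∨ (blockPair b x y ∧ x < y)

open scoped Classical in
/-- The weight of a walk in the oriented meander: each step taken in agreement with
the orientation counts `+1`, each step against it counts `-1`. -/
noncomputable def walkWeight (a b : List ℕ) {i j : ℕ} (w : (meander a b).Walk i j) : ℤ :=
  (w.darts.map fun d => if dirEdge a b d.toProd.1 d.toProd.2 then (1 : ℤ) else -1).sum

open scoped Classical in
/-- `w(P_{i,j}(a|b))`: the weight of the (unique, when the meander consists of a single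
path) path from `v_i` to `v_j` in the oriented meander. -/
noncomputable def pathWeight (a b : List ℕ) (i j : ℕ) : ℤ :=
  if h : ∃ p : (meander a b).Walk i j, p.IsPath then walkWeight a b h.choose else 0

/-- The meander of `(a, b)` consists of a single path: it has no cycles (in particular no
doubled top/bottom edge, which would be a 2-cycle) and all positions `1, …, n` are
connected.  This is exactly the condition for `p^A(a|b)` to be Frobenius. -/
def IsSinglePath (a b : List ℕ) : Prop :=
  (meander a b).IsAcyclic ∧
  (∀ i j, i ∈ Finset.Icc 1 a.sum → j ∈ Finset.Icc 1 a.sum → (meander a b).Reachable i j) ∧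
  ∀ i j, ¬(blockPair a i j ∧ blockPair b i j)

/-- `i` and `j` lie in the same block of the composition `c`. -/
def sameBlock (c : List ℕ) (i j : ℕ) : Prop :=
  ∃ k, k < c.length ∧ (c.take k).sum < i ∧ i ≤ (c.take k).sum + c.getD k 0 ∧
    (c.take k).sum < j ∧ j ≤ (c.take k).sum + c.getD k 0

/-- The matrix position `(i, j)` belongs to the seaweed `p^A(a|b)`. -/
def seaweedPos (a b : List ℕ) (i j : ℕ) : Prop :=
  (j ≤ i ∧ sameBlock a i j) ∨ (i ≤ j ∧ sameBlock b i j)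

open scoped Classical in
/-- The block of the spectrum matrix of `p^A(a|b)` on rows `R` and columns `C`:
the multiset of weights `w(P_{i,j})` over positions `(i,j)` of the seaweed with
`i ∈ R`, `j ∈ C`. -/
noncomputable def spectrumBlock (a b : List ℕ) (R C : Finset ℕ) : Multiset ℤ :=
  ((R ×ˢ C).filter fun p => seaweedPos a b p.1 p.2).val.map fun p => pathWeight a b p.1 p.2

/-- The multiset of all values of the extended spectrum matrix of `p^A(a|b)`:
the weights `w(P_{i,j})` over all pairs `1 ≤ i, j ≤ n`. -/
noncomputable def extendedValues (a b : List ℕ) : Multiset ℤ :=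
  (Finset.Icc 1 a.sum ×ˢ Finset.Icc 1 a.sum).val.map fun p => pathWeight a b p.1 p.2

/-- The spectrum of a Frobenius type-A seaweed `p^A(a|b)`: the multiset of entries of
its spectrum matrix, with one copy of `0` removed. -/
noncomputable def spectrum (a b : List ℕ) : Multiset ℤ :=
  spectrumBlock a b (Finset.Icc 1 a.sum) (Finset.Icc 1 a.sum) - {0}

/-- The extended spectrum: all entries of the extended spectrum matrix, with one copy
of `0` removed. -/
noncomputable def extendedSpectrum (a b : List ℕ) : Multiset ℤ :=
  extendedValues a b - {0}

/-- Listing the distinct values of the multiset `S` in increasing order, the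
corresponding sequence of multiplicities is log-concave. -/
def HasLogConcaveSpectrum (S : Multiset ℤ) : Prop :=
  ∀ i : ℕ, 0 < i → i + 1 < (S.toFinset.sort (· ≤ ·)).length →
    S.count ((S.toFinset.sort (· ≤ ·)).getD (i - 1) 0) *
      S.count ((S.toFinset.sort (· ≤ ·)).getD (i + 1) 0) ≤
      S.count ((S.toFinset.sort (· ≤ ·)).getD i 0) ^ 2

lemma blockPair_singleton {n x y : ℕ} :
    blockPair [n] x y ↔ 1 ≤ x ∧ 1 ≤ y ∧ x + y = n + 1 ∧ x ≠ y := by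
  constructor
  · rintro ⟨m, hm, hx, hy, hsum, hne⟩
    obtain rfl : m = 0 := by simpa using hm
    simp_all
    omega
  · rintro ⟨hx, hy, hsum, hne⟩
    exact ⟨0, by simp, by simp only [List.take_zero, List.sum_nil]; omega,
      by simp only [List.take_zero, List.sum_nil]; omega, by simpa using hsum, hne⟩

lemma blockPair_pair_one {n x y : ℕ} : blockPair [n, 1] x y ↔ blockPair [n] x y := by
  constructor
  · rintro ⟨m, hm, hx, hy, hsum, hne⟩
    obtain rfl | rfl : m = 0 ∨ m = 1 := by simp at hm; omega
    all_goals simp_all [blockPair_singleton]; omega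
  · rintro ⟨m, hm, hx, hy, hsum, hne⟩
    obtain rfl : m = 0 := by simpa using hm
    exact ⟨0, by simp, hx, hy, hsum, hne⟩

section Potential

variable {a b : List ℕ} {f : ℕ → ℤ}

open scoped Classical in
def IsWeightPotential (a b : List ℕ) (f : ℕ → ℤ) : Prop :=
  ∀ x y, (meander a b).Adj x y → (if dirEdge a b x y then (1 : ℤ) else -1) = f x - f y

lemma IsWeightPotential.walkWeight_eq (hf : IsWeightPotential a b f) {i j : ℕ}
    (w : (meander a b).Walk i j) : walkWeight a b w = f i - f j := by
  induction w with
  | nil => simp [walkWeight]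
  | cons h p ih =>
    simp only [walkWeight, SimpleGraph.Walk.darts_cons, List.map_cons, List.sum_cons] at ih ⊢
    rw [ih, hf _ _ h]
    ring

lemma IsWeightPotential.pathWeight_eq (hf : IsWeightPotential a b f) {i j : ℕ}
    (hij : (meander a b).Reachable i j) : pathWeight a b i j = f i - f j := by
  obtain ⟨w⟩ := hij
  have hpath : ∃ p : (meander a b).Walk i j, p.IsPath := ⟨w.toPath, w.toPath.2⟩
  rw [pathWeight, dif_pos hpath, hf.walkWeight_eq]

end Potential

/-- The distance from `v_v` to `v_{k+1}` along the meander of `p^A(k|1 / k+1)`. -/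
def endDistance (k v : ℕ) : ℕ := if 2 * v ≤ k + 1 then 2 * v - 1 else 2 * (k + 1) - 2 * v

lemma isWeightPotential_endDistance (k : ℕ) :
    IsWeightPotential [k, 1] [k + 1] fun v => (endDistance k v : ℤ) := by
  intro x y hxy
  simp only [meander, dirEdge, blockPair_pair_one, blockPair_singleton] at hxy ⊢
  unfold endDistance
  split_ifs <;> omega

lemma exists_adj_endDistance_eq {k i n : ℕ} (hi : i ∈ Finset.Icc 1 (k + 1))
    (hn : endDistance k i = n + 1) :
    ∃ j ∈ Finset.Icc 1 (k + 1), (meander [k, 1] [k + 1]).Adj i j ∧ endDistance k j = n := by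
  rw [Finset.mem_Icc] at hi
  unfold endDistance at hn
  by_cases hsmall : 2 * i ≤ k + 1
  · refine ⟨k + 2 - i, Finset.mem_Icc.mpr ⟨by omega, by omega⟩,
      Or.inr (blockPair_singleton.mpr ⟨by omega, by omega, by omega, by omega⟩), ?_⟩
    unfold endDistance
    split_ifs at hn ⊢ <;> omega
  · rw [if_neg hsmall] at hn
    refine ⟨k + 1 - i, Finset.mem_Icc.mpr ⟨by omega, by omega⟩,
      Or.inl (blockPair_pair_one.mpr (blockPair_singleton.mpr
        ⟨by omega, by omega, by omega, by omega⟩)), ?_⟩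
    unfold endDistance
    split_ifs <;> omega

lemma reachable_end {k : ℕ} (n : ℕ) {i : ℕ} (hi : i ∈ Finset.Icc 1 (k + 1))
    (hn : endDistance k i = n) : (meander [k, 1] [k + 1]).Reachable i (k + 1) := by
  induction n generalizing i with
  | zero =>
    rw [Finset.mem_Icc] at hi
    obtain rfl : i = k + 1 := by unfold endDistance at hn; split_ifs at hn <;> omega
    rfl
  | succ n ih =>
    obtain ⟨j, hj, hadj, hjn⟩ := exists_adj_endDistance_eq hi hn
    exact hadj.reachable.trans (ih hj hjn)

lemma pathWeight_to_end {k i : ℕ} (hi : i ∈ Finset.Icc 1 (k + 1)) :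
    pathWeight [k, 1] [k + 1] i (k + 1) = endDistance k i := by
  rw [(isWeightPotential_endDistance k).pathWeight_eq (reachable_end _ hi rfl)]
  simp [endDistance]

lemma endDistance_injOn (k : ℕ) : Set.InjOn (endDistance k) (Finset.Icc 1 (k + 1)) := by
  intro i hi j hj h
  simp only [Finset.coe_Icc, Set.mem_Icc] at hi hj
  unfold endDistance at h
  split_ifs at h <;> omega

lemma image_endDistance (k : ℕ) :
    (Finset.Icc 1 (k + 1)).image (endDistance k) = Finset.range (k + 1) := by
  ext d
  simp only [Finset.mem_image, Finset.mem_Icc, Finset.mem_range]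
  constructor
  · rintro ⟨i, ⟨hi1, hi2⟩, rfl⟩
    unfold endDistance
    split_ifs <;> omega
  · intro hd
    rcases Nat.even_or_odd d with ⟨m, hm⟩ | ⟨m, hm⟩
    · exact ⟨k + 1 - m, by omega, by unfold endDistance; split_ifs <;> omega⟩
    · exact ⟨m + 1, by omega, by unfold endDistance; split_ifs <;> omega⟩

theorem statement6_general (k : ℕ) :
    ((Finset.Icc 1 (k + 1)).val.map fun i => pathWeight [k, 1] [k + 1] i (k + 1))
      = (Multiset.range (k + 1)).map (fun i : ℕ => (i : ℤ)) := by
  calc ((Finset.Icc 1 (k + 1)).val.map fun i => pathWeight [k, 1] [k + 1] i (k + 1))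
      = ((Finset.Icc 1 (k + 1)).val.map (endDistance k)).map (fun d : ℕ => (d : ℤ)) := by
        rw [Multiset.map_map]
        exact Multiset.map_congr rfl fun i hi => pathWeight_to_end hi
    _ = (Multiset.range (k + 1)).map (fun i : ℕ => (i : ℤ)) := by
        rw [← Finset.image_val_of_injOn (endDistance_injOn k), image_endDistance,
          Finset.range_val]

/-- For `k ≥ 1` and `g_k = p^A(k|1 / k+1)`, the multiset
`{ w(P_{i,k+1}(g_k)) : 1 ≤ i ≤ k+1 }` equals `{0, 1, …, k}`, each value once. -/
theorem statement6 (k : ℕ) (hk : 1 ≤ k) :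
    ((Finset.Icc 1 (k + 1)).val.map fun i => pathWeight [k, 1] [k + 1] i (k + 1))
      = (Multiset.range (k + 1)).map (fun i : ℕ => (i : ℤ)) :=
  statement6_general k

end Seaweed
end

section
/- For every integer k ≥ 1, let g_k = p^A(k+1|k / 2k+1), a Frobenius type-A seaweed. If k = 1, the spectrum of g_k is {−1, 0 with multiplicity 2, 1 with multiplicity 2, 2}. If k > 1, the spectrum of g_k is {−k, 0 with multiplicity 3k−1, 1 with multiplicity 3k−1, k+1} ∪ ⋃_{i=1}^{k−1} { (−k+i) with multiplicity 3i, (k−i+1) with multiplicity 3i }. Moreover, g_k has the log-concave spectrum property. -/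
/-!
The oriented meander of `(k+1, k | 2k+1)` carries a height function that rises by one along
every oriented edge, so every path weight `w(P_{i,j})` is a difference of heights. The meander
is connected: a bottom arc followed by a top arc acts as `x ↦ x + (k+1)` modulo `2k+1`, and two
such moves give `x ↦ x + 1`.

On the top block `A = [1, k+1]` the height is a bijection onto `[-1, k-1]`, on `B = [k+2, 2k+1]`
onto `[1, k]`. The seaweed positions are those of `A × A`, `A × B` and `B × B`, so the spectrum is
a sum of three multisets of differences of integer intervals, whose multiplicities are explicit.
The resulting multiplicity sequence `1, 3, 6, …, 3(k-1), 3k-1, 3k-1, 3(k-1), …, 6, 3, 1` is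
symmetric under `z ↦ 1 - z`, and log-concave because `(3m-3)(3m+3) ≤ (3m)^2`.
-/

namespace Seaweed

section Potential

variable {a b : List ℕ}

open scoped Classical in
theorem walkWeight_eq_of_potential (f : ℕ → ℤ)
    (hf : ∀ x y, (meander a b).Adj x y → f y - f x = if dirEdge a b x y then 1 else -1)
    {i j : ℕ} (w : (meander a b).Walk i j) : walkWeight a b w = f j - f i := by
  induction w with
  | nil => simp [walkWeight]
  | @cons x y z hxy p ih =>
    unfold walkWeight at ih ⊢
    rw [SimpleGraph.Walk.darts_cons, List.map_cons, List.sum_cons, ih]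
    have := hf x y hxy
    simp only at this ⊢
    omega

open scoped Classical in
theorem pathWeight_eq_of_potential (f : ℕ → ℤ)
    (hf : ∀ x y, (meander a b).Adj x y → f y - f x = if dirEdge a b x y then 1 else -1)
    {i j : ℕ} (h : (meander a b).Reachable i j) : pathWeight a b i j = f j - f i := by
  obtain ⟨w⟩ := h
  have hpath : ∃ p : (meander a b).Walk i j, p.IsPath := ⟨w.toPath.1, w.toPath.2⟩
  rw [pathWeight, dif_pos hpath, walkWeight_eq_of_potential f hf]

end Potential

def differences {β : Type*} [Sub β] (S T : Finset β) : Multiset β :=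
  (S ×ˢ T).val.map fun p => p.2 - p.1

theorem map_sub_product_eq_differences_image {α β : Type*} [Sub β] [DecidableEq β]
    {S T : Finset α} {f : α → β} (hS : Set.InjOn f S) (hT : Set.InjOn f T) :
    (S ×ˢ T).val.map (fun p => f p.2 - f p.1) = differences (S.image f) (T.image f) := by
  rw [differences, Finset.product_val, Finset.product_val, Finset.image_val_of_injOn hS,
    Finset.image_val_of_injOn hT]
  induction S.val using Multiset.induction_on with
  | empty => simp
  | cons x s ih => simp [Multiset.cons_product, ih, Multiset.map_map]

theorem count_differences_Icc (a b c d z : ℤ) :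
    (differences (Finset.Icc a b) (Finset.Icc c d)).count z
      = (min b (d - z) + 1 - max a (c - z)).toNat := by
  have hfiber : (Finset.Icc a b ×ˢ Finset.Icc c d).filter (fun p => z = p.2 - p.1)
      = (Finset.Icc (max a (c - z)) (min b (d - z))).image (fun s => (s, s + z)) := by
    ext ⟨s, t⟩
    simp only [Finset.mem_filter, Finset.mem_product, Finset.mem_Icc, Finset.mem_image,
      Prod.mk.injEq, max_le_iff, le_min_iff]
    constructor
    · rintro ⟨⟨⟨h1, h2⟩, h3, h4⟩, rfl⟩
      exact ⟨s, by omega, rfl, by omega⟩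
    · rintro ⟨s, hs, rfl, rfl⟩
      omega
  rw [differences, Multiset.count_map, ← Finset.filter_val, ← Finset.card_def, hfiber,
    Finset.card_image_of_injective _ (fun s t h => (Prod.mk.inj h).1), Int.card_Icc]

theorem sort_Icc_eq_map_range (a b : ℤ) :
    (Finset.Icc a b).sort (· ≤ ·)
      = (List.range (b + 1 - a).toNat).map fun i : ℕ => a + (i : ℤ) := by
  have hnodup : ((List.range (b + 1 - a).toNat).map fun i : ℕ => a + (i : ℤ)).Nodup :=
    List.nodup_range.map fun i j h => by simpa using h
  have hIcc : Finset.Icc a b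
      = ((List.range (b + 1 - a).toNat).map fun i : ℕ => a + (i : ℤ)).toFinset := by
    ext z
    simp only [Finset.mem_Icc, List.mem_toFinset, List.mem_map, List.mem_range]
    exact ⟨fun hz => ⟨(z - a).toNat, by omega, by omega⟩, by rintro ⟨i, hi, rfl⟩; omega⟩
  rw [hIcc, List.toFinset_sort _ hnodup, List.pairwise_map]
  exact List.pairwise_lt_range.imp fun h => by omega

theorem hasLogConcaveSpectrum_of_toFinset_eq_Icc {S : Multiset ℤ} {a b : ℤ}
    (hS : S.toFinset = Finset.Icc a b)
    (h : ∀ z, S.count (z - 1) * S.count (z + 1) ≤ S.count z ^ 2) :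
    HasLogConcaveSpectrum S := by
  intro i hi hlen
  rw [hS, sort_Icc_eq_map_range] at hlen ⊢
  rw [List.length_map, List.length_range] at hlen
  rw [List.getD_eq_getElem _ _ (by simp; omega), List.getD_eq_getElem _ _ (by simp; omega),
    List.getD_eq_getElem _ _ (by simp; omega)]
  simp only [List.getElem_map, List.getElem_range]
  convert h (a + i) using 3 <;> push_cast [Nat.cast_sub hi] <;> ring

theorem blockPair_top_iff (k x y : ℕ) :
    blockPair [k + 1, k] x y ↔
      (x + y = k + 2 ∧ 1 ≤ x ∧ 1 ≤ y ∨ x + y = 3 * k + 3 ∧ k + 2 ≤ x ∧ k + 2 ≤ y) ∧ x ≠ y := by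
  constructor
  · rintro ⟨m, hm, h⟩
    simp only [List.length_cons, List.length_nil] at hm
    interval_cases m <;> simp_all <;> omega
  · rintro ⟨⟨h1, h2, h3⟩ | ⟨h1, h2, h3⟩, hne⟩
    · exact ⟨0, by simp, by simpa, by simpa, by simp; omega, hne⟩
    · exact ⟨1, by simp, by simp; omega, by simp; omega, by simp; omega, hne⟩

theorem blockPair_bottom_iff (k x y : ℕ) :
    blockPair [2 * k + 1] x y ↔ x + y = 2 * k + 2 ∧ 1 ≤ x ∧ 1 ≤ y ∧ x ≠ y := by
  constructor
  · rintro ⟨m, hm, h⟩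
    obtain rfl : m = 0 := by simpa using hm
    simp_all
    omega
  · rintro ⟨h1, h2, h3, hne⟩
    exact ⟨0, by simp, by simpa, by simpa, by simp; omega, hne⟩

theorem sameBlock_top_iff (k x y : ℕ) :
    sameBlock [k + 1, k] x y ↔
      1 ≤ x ∧ x ≤ k + 1 ∧ 1 ≤ y ∧ y ≤ k + 1 ∨
      k + 2 ≤ x ∧ x ≤ 2 * k + 1 ∧ k + 2 ≤ y ∧ y ≤ 2 * k + 1 := by
  constructor
  · rintro ⟨m, hm, h⟩
    simp only [List.length_cons, List.length_nil] at hm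
    interval_cases m <;> simp_all <;> omega
  · rintro (⟨h1, h2, h3, h4⟩ | ⟨h1, h2, h3, h4⟩)
    · exact ⟨0, by simp, by simpa, by simp; omega, by simpa, by simp; omega⟩
    · exact ⟨1, by simp, by simp; omega, by simp; omega, by simp; omega, by simp; omega⟩

theorem sameBlock_bottom_iff (k x y : ℕ) :
    sameBlock [2 * k + 1] x y ↔ 1 ≤ x ∧ x ≤ 2 * k + 1 ∧ 1 ≤ y ∧ y ≤ 2 * k + 1 := by
  constructor
  · rintro ⟨m, hm, h⟩
    obtain rfl : m = 0 := by simpa using hm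
    simp_all
    omega
  · rintro ⟨h1, h2, h3, h4⟩
    exact ⟨0, by simp, by simpa, by simp; omega, by simpa, by simp; omega⟩

theorem reachable_of_blockPair_or_eq {a b : List ℕ} {x y : ℕ}
    (h : blockPair a x y ∨ blockPair b x y ∨ x = y) : (meander a b).Reachable x y := by
  rcases h with h | h | rfl
  · exact SimpleGraph.Adj.reachable (Or.inl h)
  · exact SimpleGraph.Adj.reachable (Or.inr h)
  · rfl

theorem reachable_add_succ_mod {k x : ℕ} (hx1 : 1 ≤ x) (hx2 : x ≤ 2 * k + 1) :
    (meander [k + 1, k] [2 * k + 1]).Reachable x (if x ≤ k then x + k + 1 else x - k) := by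
  have hbottom : (meander [k + 1, k] [2 * k + 1]).Reachable x (2 * k + 2 - x) :=
    reachable_of_blockPair_or_eq (by rw [blockPair_bottom_iff]; omega)
  refine hbottom.trans (reachable_of_blockPair_or_eq ?_)
  rw [blockPair_top_iff]
  split_ifs <;> omega

theorem reachable_succ {k x : ℕ} (hx1 : 1 ≤ x) (hx2 : x ≤ 2 * k) :
    (meander [k + 1, k] [2 * k + 1]).Reachable x (x + 1) := by
  have h := (reachable_add_succ_mod (k := k) hx1 (by omega)).trans
    (reachable_add_succ_mod (k := k) (x := if x ≤ k then x + k + 1 else x - k)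
      (by split_ifs <;> omega) (by split_ifs <;> omega))
  convert h using 1
  split_ifs <;> omega

theorem reachable_one {k : ℕ} :
    ∀ x, 1 ≤ x → x ≤ 2 * k + 1 → (meander [k + 1, k] [2 * k + 1]).Reachable 1 x := by
  intro x hx1 hx2
  induction x, hx1 using Nat.le_induction with
  | base => rfl
  | succ x hx ih => exact (ih (by omega)).trans (reachable_succ hx (by omega))

def height (k v : ℕ) : ℤ :=
  if v ≤ k + 1 then (if 2 * v < k + 2 then 2 * (v : ℤ) - 2 else 2 * (k : ℤ) + 1 - 2 * v)
  else (if 2 * v ≤ 3 * k + 2 then 2 * (v : ℤ) - 2 * k - 2 else 4 * (k : ℤ) + 3 - 2 * v)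

open scoped Classical in
theorem height_sub_of_adj {k x y : ℕ} (h : (meander [k + 1, k] [2 * k + 1]).Adj x y) :
    height k y - height k x = if dirEdge [k + 1, k] [2 * k + 1] x y then 1 else -1 := by
  unfold dirEdge height
  rcases h with h | h <;> simp only [blockPair_top_iff, blockPair_bottom_iff] at h ⊢ <;>
    split_ifs <;> omega

theorem pathWeight_eq_height_sub {k i j : ℕ} (hi1 : 1 ≤ i) (hi2 : i ≤ 2 * k + 1)
    (hj1 : 1 ≤ j) (hj2 : j ≤ 2 * k + 1) :
    pathWeight [k + 1, k] [2 * k + 1] i j = height k j - height k i :=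
  pathWeight_eq_of_potential (height k) (fun _ _ => height_sub_of_adj)
    ((reachable_one i hi1 hi2).symm.trans (reachable_one j hj1 hj2))

theorem height_injOn_Icc_left (k : ℕ) : Set.InjOn (height k) (Finset.Icc 1 (k + 1)) := by
  intro v hv w hw h
  simp only [Finset.coe_Icc, Set.mem_Icc] at hv hw
  unfold height at h
  split_ifs at h <;> omega

theorem height_injOn_Icc_right (k : ℕ) :
    Set.InjOn (height k) (Finset.Icc (k + 2) (2 * k + 1)) := by
  intro v hv w hw h
  simp only [Finset.coe_Icc, Set.mem_Icc] at hv hw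
  unfold height at h
  split_ifs at h <;> omega

theorem image_height_Icc_left (k : ℕ) :
    (Finset.Icc 1 (k + 1)).image (height k) = Finset.Icc (-1) ((k : ℤ) - 1) := by
  refine Finset.eq_of_subset_of_card_le (fun s hs => ?_) ?_
  · obtain ⟨v, hv, rfl⟩ := Finset.mem_image.1 hs
    rw [Finset.mem_Icc] at hv ⊢
    unfold height
    split_ifs <;> omega
  · rw [Finset.card_image_of_injOn (height_injOn_Icc_left k), Int.card_Icc, Nat.card_Icc]
    omega

theorem image_height_Icc_right (k : ℕ) :
    (Finset.Icc (k + 2) (2 * k + 1)).image (height k) = Finset.Icc 1 (k : ℤ) := by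
  refine Finset.eq_of_subset_of_card_le (fun s hs => ?_) ?_
  · obtain ⟨v, hv, rfl⟩ := Finset.mem_image.1 hs
    rw [Finset.mem_Icc] at hv ⊢
    unfold height
    split_ifs <;> omega
  · rw [Finset.card_image_of_injOn (height_injOn_Icc_right k), Int.card_Icc, Nat.card_Icc]
    omega

open scoped Classical in
theorem spectrumBlock_eq (k : ℕ) :
    spectrumBlock [k + 1, k] [2 * k + 1] (Finset.Icc 1 (2 * k + 1)) (Finset.Icc 1 (2 * k + 1))
      = differences (Finset.Icc (-1) ((k : ℤ) - 1)) (Finset.Icc (-1) ((k : ℤ) - 1))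
        + differences (Finset.Icc (-1) ((k : ℤ) - 1)) (Finset.Icc 1 (k : ℤ))
        + differences (Finset.Icc 1 (k : ℤ)) (Finset.Icc 1 (k : ℤ)) := by
  set A := Finset.Icc 1 (k + 1)
  set B := Finset.Icc (k + 2) (2 * k + 1)
  have hpositions : (Finset.Icc 1 (2 * k + 1) ×ˢ Finset.Icc 1 (2 * k + 1)).filter
      (fun p => seaweedPos [k + 1, k] [2 * k + 1] p.1 p.2)
      = (A ×ˢ A).disjUnion ((A ×ˢ B).disjUnion (B ×ˢ B)
          (Finset.disjoint_left.2 (by simp [A, B]; omega)))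
          (Finset.disjoint_left.2 (by simp [A, B]; omega)) := by
    ext ⟨i, j⟩
    simp only [Finset.mem_filter, Finset.mem_product, Finset.mem_Icc, Finset.mem_disjUnion,
      seaweedPos, sameBlock_top_iff, sameBlock_bottom_iff, A, B]
    omega
  have hweights : ∀ p ∈ ((Finset.Icc 1 (2 * k + 1) ×ˢ Finset.Icc 1 (2 * k + 1)).filter
      (fun p => seaweedPos [k + 1, k] [2 * k + 1] p.1 p.2)).val,
      pathWeight [k + 1, k] [2 * k + 1] p.1 p.2 = height k p.2 - height k p.1 := by
    intro p hp
    simp only [Finset.mem_val, Finset.mem_filter, Finset.mem_product, Finset.mem_Icc] at hp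
    exact pathWeight_eq_height_sub hp.1.1.1 hp.1.1.2 hp.1.2.1 hp.1.2.2
  rw [spectrumBlock, Multiset.map_congr rfl hweights, hpositions, Finset.disjUnion_val,
    Finset.disjUnion_val, Multiset.map_add, Multiset.map_add, ← add_assoc,
    map_sub_product_eq_differences_image (height_injOn_Icc_left k) (height_injOn_Icc_left k),
    map_sub_product_eq_differences_image (height_injOn_Icc_left k) (height_injOn_Icc_right k),
    map_sub_product_eq_differences_image (height_injOn_Icc_right k) (height_injOn_Icc_right k),
    image_height_Icc_left, image_height_Icc_right]

def spectrumMult (k : ℕ) (z : ℤ) : ℕ :=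
  if z = -(k : ℤ) ∨ z = (k : ℤ) + 1 then 1
  else if z = 0 ∨ z = 1 then 3 * k - 1
  else if -(k : ℤ) < z ∧ z < 0 then 3 * (z + k).toNat
  else if 1 < z ∧ z < (k : ℤ) + 1 then 3 * ((k : ℤ) + 1 - z).toNat
  else 0

theorem count_spectrum {k : ℕ} (hk : 1 ≤ k) (z : ℤ) :
    (spectrum [k + 1, k] [2 * k + 1]).count z = spectrumMult k z := by
  rw [spectrum, Multiset.count_sub, show [k + 1, k].sum = 2 * k + 1 by simp; omega,
    spectrumBlock_eq, Multiset.count_add, Multiset.count_add, count_differences_Icc,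
    count_differences_Icc, count_differences_Icc, Multiset.count_singleton]
  unfold spectrumMult
  split_ifs <;> omega

theorem sum_ite_of_iff_eq {α M : Type*} [DecidableEq α] [AddCommMonoid M] {s : Finset α}
    {p : α → Prop} [DecidablePred p] {m : α} (g : α → M) (hp : ∀ i ∈ s, p i ↔ i = m) :
    (∑ i ∈ s, if p i then g i else 0) = if m ∈ s then g m else 0 := by
  rw [Finset.sum_congr rfl fun i hi => if_congr (hp i hi) rfl rfl, Finset.sum_ite_eq']

theorem count_spectrum_formula (k : ℕ) (z : ℤ) :
    (Multiset.replicate 1 (-(k : ℤ)) + Multiset.replicate (3 * k - 1) (0 : ℤ) +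
        Multiset.replicate (3 * k - 1) (1 : ℤ) + Multiset.replicate 1 ((k : ℤ) + 1) +
        ∑ i ∈ Finset.Icc 1 (k - 1),
          (Multiset.replicate (3 * i) ((i : ℤ) - k) +
            Multiset.replicate (3 * i) ((k : ℤ) - i + 1))).count z = spectrumMult k z := by
  simp only [Multiset.count_add, Multiset.count_sum', Multiset.count_replicate,
    Finset.sum_add_distrib]
  rw [sum_ite_of_iff_eq (m := (z + k).toNat) _ fun i hi => by simp at hi; omega,
    sum_ite_of_iff_eq (m := ((k : ℤ) + 1 - z).toNat) _ fun i hi => by simp at hi; omega]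
  unfold spectrumMult
  simp only [Finset.mem_Icc]
  split_ifs <;> omega

theorem spectrum_eq {k : ℕ} (hk : 1 ≤ k) :
    spectrum [k + 1, k] [2 * k + 1]
      = Multiset.replicate 1 (-(k : ℤ)) + Multiset.replicate (3 * k - 1) (0 : ℤ) +
          Multiset.replicate (3 * k - 1) (1 : ℤ) + Multiset.replicate 1 ((k : ℤ) + 1) +
          ∑ i ∈ Finset.Icc 1 (k - 1),
            (Multiset.replicate (3 * i) ((i : ℤ) - k) +
              Multiset.replicate (3 * i) ((k : ℤ) - i + 1)) :=
  Multiset.ext.2 fun z => (count_spectrum hk z).trans (count_spectrum_formula k z).symm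

theorem spectrumMult_one_sub (k : ℕ) (z : ℤ) : spectrumMult k (1 - z) = spectrumMult k z := by
  unfold spectrumMult
  split_ifs <;> omega

theorem spectrumMult_logConcave_of_nonpos {k : ℕ} (hk : 1 ≤ k) {z : ℤ} (hz : z ≤ 0) :
    spectrumMult k (z - 1) * spectrumMult k (z + 1) ≤ spectrumMult k z ^ 2 := by
  obtain hlow | hmid | rfl : z ≤ -k ∨ (-k < z ∧ z < 0) ∨ z = 0 := by omega
  · have hprev : spectrumMult k (z - 1) = 0 := by unfold spectrumMult; split_ifs <;> omega
    simp [hprev]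
  · obtain ⟨m, hm⟩ : ∃ m : ℕ, z + k = m := ⟨(z + k).toNat, by omega⟩
    have hcur : spectrumMult k z = 3 * m := by unfold spectrumMult; split_ifs <;> omega
    have hnext : spectrumMult k (z + 1) ≤ 3 * m + 3 := by
      unfold spectrumMult; split_ifs <;> omega
    obtain hprev | ⟨hprev, rfl⟩ : spectrumMult k (z - 1) + 3 ≤ 3 * m ∨
        spectrumMult k (z - 1) = 1 ∧ m = 1 := by
      unfold spectrumMult; split_ifs <;> omega
    · rw [hcur]
      nlinarith
    · rw [hcur, hprev]
      omega
  · have hprev : spectrumMult k (0 - 1) ≤ 3 * k - 1 := by unfold spectrumMult; split_ifs <;> omega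
    have hnext : spectrumMult k (0 + 1) = 3 * k - 1 := by unfold spectrumMult; split_ifs <;> omega
    have hcur : spectrumMult k 0 = 3 * k - 1 := by unfold spectrumMult; split_ifs <;> omega
    rw [hnext, hcur, sq]
    exact Nat.mul_le_mul_right _ hprev

theorem spectrumMult_logConcave {k : ℕ} (hk : 1 ≤ k) (z : ℤ) :
    spectrumMult k (z - 1) * spectrumMult k (z + 1) ≤ spectrumMult k z ^ 2 := by
  rcases le_or_gt z 0 with hz | hz
  · exact spectrumMult_logConcave_of_nonpos hk hz
  · have h := spectrumMult_logConcave_of_nonpos hk (z := 1 - z) (by omega)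
    rwa [show 1 - z - 1 = 1 - (z + 1) by ring, show 1 - z + 1 = 1 - (z - 1) by ring,
      spectrumMult_one_sub, spectrumMult_one_sub, spectrumMult_one_sub, mul_comm] at h

theorem toFinset_spectrum {k : ℕ} (hk : 1 ≤ k) :
    (spectrum [k + 1, k] [2 * k + 1]).toFinset = Finset.Icc (-(k : ℤ)) ((k : ℤ) + 1) := by
  ext z
  rw [Multiset.mem_toFinset, ← Multiset.count_pos, count_spectrum hk, Finset.mem_Icc]
  unfold spectrumMult
  split_ifs <;> omega

/-- For `k ≥ 1`, the spectrum of the Frobenius type-A seaweed `p^A(k+1|k / 2k+1)`: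
it is `{-1, 0^2, 1^2, 2}` for `k = 1` and
`{-k, 0^{3k-1}, 1^{3k-1}, k+1} ∪ ⋃_{i=1}^{k-1} {(-k+i)^{3i}, (k-i+1)^{3i}}` for `k > 1`;
moreover the seaweed has the log-concave spectrum property. -/
theorem statement11 (k : ℕ) (hk : 1 ≤ k) :
    (k = 1 →
      spectrum [k + 1, k] [2 * k + 1]
        = Multiset.replicate 1 (-1 : ℤ) + Multiset.replicate 2 (0 : ℤ) +
          Multiset.replicate 2 (1 : ℤ) + Multiset.replicate 1 (2 : ℤ)) ∧
    (1 < k →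
      spectrum [k + 1, k] [2 * k + 1]
        = Multiset.replicate 1 (-(k : ℤ)) + Multiset.replicate (3 * k - 1) (0 : ℤ) +
          Multiset.replicate (3 * k - 1) (1 : ℤ) + Multiset.replicate 1 ((k : ℤ) + 1) +
          ∑ i ∈ Finset.Icc 1 (k - 1),
            (Multiset.replicate (3 * i) ((i : ℤ) - k) +
              Multiset.replicate (3 * i) ((k : ℤ) - i + 1))) ∧
    HasLogConcaveSpectrum (spectrum [k + 1, k] [2 * k + 1]) := by
  refine ⟨fun hk1 => ?_, fun _ => spectrum_eq hk, ?_⟩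
  · subst hk1
    simpa using spectrum_eq le_rfl
  · refine hasLogConcaveSpectrum_of_toFinset_eq_Icc (toFinset_spectrum hk) fun z => ?_
    simp only [count_spectrum hk]
    exact spectrumMult_logConcave hk z

end Seaweed
end

section
/- Let a_1,…,a_m and b_1,…,b_t be positive integers such that g = p^A(a_1|…|a_m|1 / b_1|…|b_t) is a Frobenius type-A seaweed (its meander is a single path) with spectrum S. Then g' = p^A(a_1|…|a_m|2 / b_1|…|b_t|1) is a Frobenius type-A seaweed whose spectrum is the multiset S ∪ {0, 1}. -/
/-!
Write `n = a.sum`.  A block of size `1` carries no arc, so appending `2` to `a` and `1` to `b`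
adds to the meander the vertex `v_{n+2}` and the single top edge `v_{n+1} — v_{n+2}`, and leaves
every other arc and its orientation unchanged.  A path with a pendant edge attached is again
acyclic and connected, and the path between two old vertices does not use the new edge, so its
weight is unchanged.  The seaweed gains exactly the positions `(n+2, n+1)` and `(n+2, n+2)`,
of weights `1` (the top edge is traversed from right to left) and `0`.
-/

lemma Multiset.cons_cons_sub_singleton {α : Type*} [DecidableEq α] {x z : α} {M : Multiset α}
    (hxz : x ≠ z) (hz : z ∈ M) : x ::ₘ z ::ₘ M - {z} = M - {z} + {z, x} := by
  rw [Multiset.sub_singleton, Multiset.sub_singleton, Multiset.erase_cons_tail _ hxz,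
    Multiset.erase_cons_head, add_comm, Multiset.insert_eq_cons, Multiset.cons_add,
    Multiset.singleton_add, Multiset.cons_swap, Multiset.cons_erase hz]

namespace Seaweed

open SimpleGraph

section Compositions

lemma sum_take_add_getD_le (c : List ℕ) {k : ℕ} (hk : k < c.length) :
    (c.take k).sum + c.getD k 0 ≤ c.sum := by
  rw [List.getD_eq_getElem c 0 hk, ← List.sum_take_succ c k hk,
    ← List.sum_take_add_sum_drop c (k + 1)]
  exact Nat.le_add_right _ _

lemma exists_block_append_singleton (c : List ℕ) (s : ℕ) (P : ℕ → ℕ → Prop) :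
    (∃ k, k < (c ++ [s]).length ∧ P ((c ++ [s]).take k).sum ((c ++ [s]).getD k 0)) ↔
      (∃ k, k < c.length ∧ P (c.take k).sum (c.getD k 0)) ∨ P c.sum s := by
  have hlast : ((c ++ [s]).take c.length).sum = c.sum ∧ (c ++ [s]).getD c.length 0 = s := by
    simp
  constructor
  · rintro ⟨k, hk, hP⟩
    rw [List.length_append, List.length_singleton] at hk
    rcases Nat.lt_succ_iff_lt_or_eq.mp hk with hk | rfl
    · rw [List.take_append_of_le_length hk.le, List.getD_append _ _ _ _ hk] at hP
      exact Or.inl ⟨k, hk, hP⟩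
    · rw [hlast.1, hlast.2] at hP
      exact Or.inr hP
  · rintro (⟨k, hk, hP⟩ | hP)
    · refine ⟨k, by rw [List.length_append, List.length_singleton]; omega, ?_⟩
      rwa [List.take_append_of_le_length hk.le, List.getD_append _ _ _ _ hk]
    · exact ⟨c.length, by simp, by rwa [hlast.1, hlast.2]⟩

lemma blockPair_append_singleton (c : List ℕ) (s i j : ℕ) :
    blockPair (c ++ [s]) i j ↔ blockPair c i j ∨
      (c.sum < i ∧ c.sum < j ∧ i + j = 2 * c.sum + s + 1 ∧ i ≠ j) :=
  exists_block_append_singleton c s fun t m => t < i ∧ t < j ∧ i + j = 2 * t + m + 1 ∧ i ≠ j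

lemma blockPair_append_one (c : List ℕ) (i j : ℕ) :
    blockPair (c ++ [1]) i j ↔ blockPair c i j := by
  rw [blockPair_append_singleton]
  exact or_iff_left_of_imp fun h => absurd h (by omega)

lemma blockPair_append_two (c : List ℕ) (i j : ℕ) :
    blockPair (c ++ [2]) i j ↔ blockPair c i j ∨
      (i = c.sum + 1 ∧ j = c.sum + 2 ∨ i = c.sum + 2 ∧ j = c.sum + 1) := by
  rw [blockPair_append_singleton]
  exact or_congr_right (by omega)

lemma blockPair_bounds {c : List ℕ} {i j : ℕ} (h : blockPair c i j) :
    1 ≤ i ∧ i ≤ c.sum ∧ 1 ≤ j ∧ j ≤ c.sum := by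
  obtain ⟨k, hk, hi, hj, hij, -⟩ := h
  have := sum_take_add_getD_le c hk
  omega

lemma sameBlock_append_singleton (c : List ℕ) (s i j : ℕ) :
    sameBlock (c ++ [s]) i j ↔ sameBlock c i j ∨
      (c.sum < i ∧ i ≤ c.sum + s ∧ c.sum < j ∧ j ≤ c.sum + s) :=
  exists_block_append_singleton c s fun t m => t < i ∧ i ≤ t + m ∧ t < j ∧ j ≤ t + m

lemma sameBlock_bounds {c : List ℕ} {i j : ℕ} (h : sameBlock c i j) :
    1 ≤ i ∧ i ≤ c.sum ∧ 1 ≤ j ∧ j ≤ c.sum := by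
  obtain ⟨k, hk, hi, hi', hj, hj'⟩ := h
  have := sum_take_add_getD_le c hk
  omega

end Compositions

section Meanders

lemma meander_adj_bounds {a b : List ℕ} (hab : b.sum = a.sum) {i j : ℕ}
    (h : (meander a b).Adj i j) : 1 ≤ i ∧ i ≤ a.sum ∧ 1 ≤ j ∧ j ≤ a.sum := by
  rcases h with h | h
  · exact blockPair_bounds h
  · exact hab ▸ blockPair_bounds h

lemma meander_append_two_append_one (a b : List ℕ) :
    meander (a ++ [2]) (b ++ [1]) = meander (a ++ [1]) b ⊔ edge (a.sum + 1) (a.sum + 2) := by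
  ext i j
  change (blockPair (a ++ [2]) i j ∨ blockPair (b ++ [1]) i j) ↔
    (blockPair (a ++ [1]) i j ∨ blockPair b i j) ∨ (edge (a.sum + 1) (a.sum + 2)).Adj i j
  rw [blockPair_append_two, blockPair_append_one, blockPair_append_one, edge_adj]
  have : i = a.sum + 1 ∧ j = a.sum + 2 ∨ i = a.sum + 2 ∧ j = a.sum + 1 → i ≠ j := by omega
  tauto

lemma dirEdge_append_two_append_one (a b : List ℕ) (x y : ℕ) :
    dirEdge (a ++ [2]) (b ++ [1]) x y ↔
      dirEdge (a ++ [1]) b x y ∨ (x = a.sum + 2 ∧ y = a.sum + 1) := by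
  unfold dirEdge
  rw [blockPair_append_two, blockPair_append_one, blockPair_append_one]
  constructor
  · rintro (⟨h | h, hyx⟩ | h)
    · exact Or.inl (Or.inl ⟨h, hyx⟩)
    · exact Or.inr (by omega)
    · exact Or.inl (Or.inr h)
  · rintro ((h | h) | h)
    · exact Or.inl ⟨Or.inl h.1, h.2⟩
    · exact Or.inr h
    · exact Or.inl ⟨Or.inr (Or.inr h), by omega⟩

lemma IsSinglePath.append_two_append_one {a b : List ℕ} (hb : b.sum = a.sum + 1)
    (h : IsSinglePath (a ++ [1]) b) : IsSinglePath (a ++ [2]) (b ++ [1]) := by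
  obtain ⟨hacyc, hconn, hdouble⟩ := h
  have hs1 : (a ++ [1]).sum = a.sum + 1 := by simp
  have hs2 : (a ++ [2]).sum = a.sum + 2 := by simp
  have hbound : ∀ {i j}, (meander (a ++ [1]) b).Adj i j → i ≤ a.sum + 1 ∧ j ≤ a.sum + 1 :=
    fun h => by have := meander_adj_bounds (hb.trans hs1.symm) h; omega
  have hnew : (edge (a.sum + 1) (a.sum + 2)).Adj (a.sum + 1) (a.sum + 2) := by
    rw [edge_adj]; omega
  have hreach : ∀ i ∈ Finset.Icc 1 (a ++ [2]).sum,
      (meander (a ++ [2]) (b ++ [1])).Reachable i (a.sum + 1) := by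
    intro i hi
    rw [hs2, Finset.mem_Icc] at hi
    rw [meander_append_two_append_one]
    rcases Nat.lt_or_ge i (a.sum + 2) with hi' | hi'
    · exact (hconn i (a.sum + 1) (by rw [hs1, Finset.mem_Icc]; omega)
        (by rw [hs1, Finset.mem_Icc]; omega)).mono le_sup_left
    · obtain rfl : i = a.sum + 2 := by omega
      exact (Adj.reachable ((sup_adj ..).mpr (Or.inr hnew))).symm
  refine ⟨?_, fun i j hi hj => (hreach i hi).trans (hreach j hj).symm, ?_⟩
  · rw [meander_append_two_append_one]
    refine hacyc.sup_edge_of_not_reachable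
      (not_reachable_of_neighborSet_right_eq_empty (by omega) ?_)
    exact Set.eq_empty_of_forall_notMem fun j h => by have := hbound h; omega
  · rintro i j ⟨htop, hbot⟩
    rw [blockPair_append_two] at htop
    rw [blockPair_append_one] at hbot
    rcases htop with htop | htop
    · exact hdouble i j ⟨(blockPair_append_one a i j).mpr htop, hbot⟩
    · have := blockPair_bounds hbot
      omega

end Meanders

section PathWeights

lemma pathWeight_self (a b : List ℕ) (v : ℕ) : pathWeight a b v v = 0 := by
  have h : ∃ p : (meander a b).Walk v v, p.IsPath := ⟨.nil, .nil⟩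
  simp [pathWeight, walkWeight, Walk.darts_eq_nil.mpr (Walk.isPath_iff_nil.mp h.choose_spec)]

lemma pathWeight_eq_walkWeight {a b : List ℕ} (hacyc : (meander a b).IsAcyclic) {i j : ℕ}
    (q : (meander a b).Walk i j) (hq : q.IsPath) : pathWeight a b i j = walkWeight a b q := by
  have h : ∃ p : (meander a b).Walk i j, p.IsPath := ⟨q, hq⟩
  rw [pathWeight, dif_pos h]
  exact congrArg (fun p : (meander a b).Path i j => walkWeight a b p.1)
    ((hacyc.subsingleton_path i j).elim ⟨_, h.choose_spec⟩ ⟨q, hq⟩)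

open scoped Classical in
lemma walkWeight_mapLe {a b a' b' : List ℕ} (hle : meander a b ≤ meander a' b')
    (hdir : ∀ x y, (meander a b).Adj x y → (dirEdge a' b' x y ↔ dirEdge a b x y))
    {i j : ℕ} (q : (meander a b).Walk i j) :
    walkWeight a' b' (q.mapLe hle) = walkWeight a b q := by
  simp only [walkWeight, Walk.mapLe, Walk.darts_map, List.map_map]
  refine congrArg List.sum (List.map_congr_left fun d _ => ?_)
  exact if_congr (hdir _ _ d.adj) rfl rfl

lemma pathWeight_eq_of_le {a b a' b' : List ℕ} (hacyc : (meander a' b').IsAcyclic)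
    (hle : meander a b ≤ meander a' b')
    (hdir : ∀ x y, (meander a b).Adj x y → (dirEdge a' b' x y ↔ dirEdge a b x y))
    {i j : ℕ} (hr : (meander a b).Reachable i j) :
    pathWeight a' b' i j = pathWeight a b i j := by
  have h : ∃ p : (meander a b).Walk i j, p.IsPath := ⟨hr.some.toPath, hr.some.toPath.2⟩
  calc pathWeight a' b' i j = walkWeight a' b' (h.choose.mapLe hle) :=
        pathWeight_eq_walkWeight hacyc _ (h.choose_spec.mapLe hle)
    _ = walkWeight a b h.choose := walkWeight_mapLe hle hdir _
    _ = pathWeight a b i j := by rw [pathWeight, dif_pos h]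

lemma pathWeight_append_two_append_one {a b : List ℕ} (hb : b.sum = a.sum + 1)
    (hpath : IsSinglePath (a ++ [1]) b) {i j : ℕ} (hi : 1 ≤ i ∧ i ≤ a.sum + 1)
    (hj : 1 ≤ j ∧ j ≤ a.sum + 1) :
    pathWeight (a ++ [2]) (b ++ [1]) i j = pathWeight (a ++ [1]) b i j := by
  have hs1 : (a ++ [1]).sum = a.sum + 1 := by simp
  refine pathWeight_eq_of_le (hpath.append_two_append_one hb).1
    (meander_append_two_append_one a b ▸ le_sup_left) (fun x y hxy => ?_)
    (hpath.2.1 i j (by rw [hs1, Finset.mem_Icc]; omega) (by rw [hs1, Finset.mem_Icc]; omega))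
  have := meander_adj_bounds (hb.trans hs1.symm) hxy
  rw [dirEdge_append_two_append_one]
  exact or_iff_left_of_imp fun h => absurd h (by omega)

lemma pathWeight_append_two_append_one_last {a b : List ℕ} (hb : b.sum = a.sum + 1)
    (hpath : IsSinglePath (a ++ [1]) b) :
    pathWeight (a ++ [2]) (b ++ [1]) (a.sum + 2) (a.sum + 1) = 1 := by
  have hadj : (meander (a ++ [2]) (b ++ [1])).Adj (a.sum + 2) (a.sum + 1) := by
    rw [meander_append_two_append_one, sup_adj, edge_adj]; omega
  rw [pathWeight_eq_walkWeight (hpath.append_two_append_one hb).1 (.cons hadj .nil)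
    (by simp [Walk.cons_isPath_iff])]
  simp [walkWeight, dirEdge_append_two_append_one]

end PathWeights

section Spectra

lemma seaweedPos_append_two_append_one {a b : List ℕ} (hb : b.sum = a.sum + 1) (i j : ℕ) :
    seaweedPos (a ++ [2]) (b ++ [1]) i j ↔ seaweedPos (a ++ [1]) b i j ∨
      (i = a.sum + 2 ∧ j = a.sum + 1) ∨ (i = a.sum + 2 ∧ j = a.sum + 2) := by
  unfold seaweedPos
  rw [sameBlock_append_singleton a 2, sameBlock_append_singleton b 1,
    sameBlock_append_singleton a 1, hb]
  constructor
  · rintro (⟨hji, hA | hA⟩ | ⟨hij, hB | hB⟩)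
    · exact Or.inl (Or.inl ⟨hji, Or.inl hA⟩)
    · by_cases hi : i = a.sum + 2
      · exact Or.inr (by omega)
      · exact Or.inl (Or.inl ⟨hji, Or.inr (by omega)⟩)
    · exact Or.inl (Or.inr ⟨hij, hB⟩)
    · exact Or.inr (by omega)
  · rintro ((⟨hji, hA | hA⟩ | ⟨hij, hB⟩) | h | h)
    · exact Or.inl ⟨hji, Or.inl hA⟩
    · exact Or.inl ⟨hji, Or.inr (by omega)⟩
    · exact Or.inr ⟨hij, Or.inl hB⟩
    · exact Or.inl ⟨by omega, Or.inr (by omega)⟩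
    · exact Or.inl ⟨by omega, Or.inr (by omega)⟩

open scoped Classical in
lemma filter_seaweedPos_append_two_append_one {a b : List ℕ} (hb : b.sum = a.sum + 1) :
    (Finset.Icc 1 (a.sum + 2) ×ˢ Finset.Icc 1 (a.sum + 2)).filter
        (fun p => seaweedPos (a ++ [2]) (b ++ [1]) p.1 p.2) =
      insert (a.sum + 2, a.sum + 1) (insert (a.sum + 2, a.sum + 2)
        ((Finset.Icc 1 (a.sum + 1) ×ˢ Finset.Icc 1 (a.sum + 1)).filter
          (fun p => seaweedPos (a ++ [1]) b p.1 p.2))) := by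
  have hbound : ∀ {i j}, seaweedPos (a ++ [1]) b i j →
      1 ≤ i ∧ i ≤ a.sum + 1 ∧ 1 ≤ j ∧ j ≤ a.sum + 1 := by
    rintro i j (⟨-, h⟩ | ⟨-, h⟩)
    · simpa using sameBlock_bounds h
    · simpa [hb] using sameBlock_bounds h
  ext ⟨i, j⟩
  simp only [Finset.mem_filter, Finset.mem_product, Finset.mem_Icc, Finset.mem_insert,
    Prod.mk.injEq, seaweedPos_append_two_append_one hb]
  constructor
  · rintro ⟨-, hp | hp | hp⟩
    · exact Or.inr (Or.inr ⟨by have := hbound hp; omega, hp⟩)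
    · exact Or.inl hp
    · exact Or.inr (Or.inl hp)
  · rintro (hp | hp | ⟨-, hp⟩)
    · exact ⟨by omega, Or.inr (Or.inl hp)⟩
    · exact ⟨by omega, Or.inr (Or.inr hp)⟩
    · exact ⟨by have := hbound hp; omega, Or.inl hp⟩

lemma spectrumBlock_append_two_append_one {a b : List ℕ} (hb : b.sum = a.sum + 1)
    (hpath : IsSinglePath (a ++ [1]) b) :
    spectrumBlock (a ++ [2]) (b ++ [1]) (Finset.Icc 1 (a.sum + 2)) (Finset.Icc 1 (a.sum + 2)) =
      1 ::ₘ 0 ::ₘ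
        spectrumBlock (a ++ [1]) b (Finset.Icc 1 (a.sum + 1)) (Finset.Icc 1 (a.sum + 1)) := by
  classical
  have hnotMem : ∀ j, (a.sum + 2, j) ∉
      (Finset.Icc 1 (a.sum + 1) ×ˢ Finset.Icc 1 (a.sum + 1)).filter
        (fun p => seaweedPos (a ++ [1]) b p.1 p.2) := by
    intro j h
    simp only [Finset.mem_filter, Finset.mem_product, Finset.mem_Icc] at h
    omega
  unfold spectrumBlock
  rw [filter_seaweedPos_append_two_append_one hb, Finset.insert_val_of_notMem
    (by simp [hnotMem]),
    Finset.insert_val_of_notMem (hnotMem (a.sum + 2)), Multiset.map_cons, Multiset.map_cons,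
    pathWeight_append_two_append_one_last hb hpath, pathWeight_self]
  refine congrArg _ (congrArg _ (Multiset.map_congr rfl fun p hp => ?_))
  simp only [Finset.mem_val, Finset.mem_filter, Finset.mem_product, Finset.mem_Icc] at hp
  exact pathWeight_append_two_append_one hb hpath hp.1.1 hp.1.2

open scoped Classical in
lemma zero_mem_spectrumBlock_append_one (a b : List ℕ) :
    0 ∈ spectrumBlock (a ++ [1]) b (Finset.Icc 1 (a.sum + 1)) (Finset.Icc 1 (a.sum + 1)) := by
  refine Multiset.mem_map.mpr ⟨(a.sum + 1, a.sum + 1), ?_, pathWeight_self _ _ _⟩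
  simp only [Finset.mem_val, Finset.mem_filter, Finset.mem_product, Finset.mem_Icc]
  exact ⟨by omega,
    Or.inl ⟨le_rfl, (sameBlock_append_singleton a 1 _ _).mpr (Or.inr (by omega))⟩⟩

end Spectra

theorem statement16_general (a b : List ℕ)
    (hsum : (a ++ [1]).sum = b.sum)
    (hpath : IsSinglePath (a ++ [1]) b) :
    IsSinglePath (a ++ [2]) (b ++ [1]) ∧
    spectrum (a ++ [2]) (b ++ [1]) = spectrum (a ++ [1]) b + {0, 1} := by
  have hb : b.sum = a.sum + 1 := by simpa using hsum.symm
  refine ⟨hpath.append_two_append_one hb, ?_⟩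
  have hs1 : (a ++ [1]).sum = a.sum + 1 := by simp
  have hs2 : (a ++ [2]).sum = a.sum + 2 := by simp
  rw [spectrum, spectrum, hs1, hs2, spectrumBlock_append_two_append_one hb hpath]
  exact Multiset.cons_cons_sub_singleton one_ne_zero (zero_mem_spectrumBlock_append_one a b)

/-- If `g = p^A(a_1|…|a_m|1 / b_1|…|b_t)` is a Frobenius type-A seaweed with
spectrum `S`, then `g' = p^A(a_1|…|a_m|2 / b_1|…|b_t|1)` is a Frobenius type-A
seaweed with spectrum `S ∪ {0, 1}`. -/
theorem statement16 (a b : List ℕ)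
    (ha : ∀ x ∈ a, 0 < x) (hb : ∀ x ∈ b, 0 < x)
    (hsum : (a ++ [1]).sum = b.sum)
    (hpath : IsSinglePath (a ++ [1]) b) :
    IsSinglePath (a ++ [2]) (b ++ [1]) ∧
    spectrum (a ++ [2]) (b ++ [1]) = spectrum (a ++ [1]) b + {0, 1} :=
  statement16_general a b hsum hpath

end Seaweed
end

section
/- For every integer r ≥ 1, let g_r = p^A(2|…|2|1 / 2r+1) be the Frobenius type-A seaweed whose top composition consists of r parts equal to 2 followed by a 1, and whose bottom composition is the single part 2r+1. Then there exist positive integers a_r > b_r such that the spectrum of g_r is the multiset in which −1 occurs with multiplicity b_r, 0 occurs with multiplicity a_r, 1 occurs with multiplicity a_r, and 2 occurs with multiplicity b_r. In particular, g_r has the log-concave spectrum property. -/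
namespace Seaweed

/-!
The meander of `p^A(2|…|2|1 / 2r+1)` has top arcs `{2k+1, 2k+2}` and bottom arcs
`{v, 2r+2-v}`. Let `c = r + r % 2`, the even one of `r` and `r + 1`: every bottom arc crosses
`c` and no top arc does, so the potential `φ v = [c < v] - [v even]` rises by one along every
oriented arc, and `w(P_{i,j}) = φ j - φ i`. The spectrum is thus the multiset of `φ j - φ i`
over the positions `i ≤ j` and `(2k+2, 2k+1)`, and `φ` only sees the parity of a vertex and
its side of `c`. Explicit bijections between the resulting classes of positions show that `-1`
and `2` occur equally often and that `0` occurs exactly once more than `1`; this surplus `0`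
is the one removed from the spectrum. Weight-`2` positions inject into weight-`1` ones, missing
`(2, 1)`, which gives `b_r < a_r`.
-/

open Finset

lemma _root_.SimpleGraph.reachable_of_exists_adj_lt {V : Type*} (G : SimpleGraph V) (μ : V → ℕ)
    (S : Set V) (x₀ : V) (h : ∀ v ∈ S, v ≠ x₀ → ∃ u ∈ S, G.Adj v u ∧ μ u < μ v) :
    ∀ v ∈ S, G.Reachable x₀ v := by
  intro v
  induction hμ : μ v using Nat.strong_induction_on generalizing v with
  | _ n ih =>
    intro hv
    by_cases hv₀ : v = x₀
    · exact hv₀ ▸ SimpleGraph.Reachable.refl _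
    obtain ⟨u, hu, hadj, hlt⟩ := h v hv hv₀
    exact (ih (μ u) (hμ ▸ hlt) u rfl hu).trans hadj.symm.reachable

lemma dirEdge_or_dirEdge_of_adj {a b : List ℕ} {x y : ℕ} (h : (meander a b).Adj x y) :
    dirEdge a b x y ∨ dirEdge a b y x := by
  rcases h with h | h <;> obtain ⟨-, -, -, -, -, hne⟩ := id h <;>
    rcases Nat.lt_or_gt_of_ne hne with hxy | hxy
  · exact Or.inr (Or.inl ⟨blockPair_symm h, hxy⟩)
  · exact Or.inl (Or.inl ⟨h, hxy⟩)
  · exact Or.inl (Or.inr ⟨h, hxy⟩)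
  · exact Or.inr (Or.inr ⟨blockPair_symm h, hxy⟩)

lemma walkWeight_eq_sub_of_potential {a b : List ℕ} (φ : ℕ → ℤ)
    (hφ : ∀ x y, dirEdge a b x y → φ y = φ x + 1) {i j : ℕ} (w : (meander a b).Walk i j) :
    walkWeight a b w = φ j - φ i := by
  induction w with
  | nil => simp [walkWeight]
  | @cons x y _ hadj w ih =>
    rw [walkWeight] at ih ⊢
    rw [SimpleGraph.Walk.darts_cons, List.map_cons, List.sum_cons, ih]
    split_ifs with hd
    · linarith [hφ x y hd]
    · linarith [hφ y x ((dirEdge_or_dirEdge_of_adj hadj).resolve_left hd)]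

lemma pathWeight_eq_sub_of_potential {a b : List ℕ} (φ : ℕ → ℤ)
    (hφ : ∀ x y, dirEdge a b x y → φ y = φ x + 1) {i j : ℕ} (h : (meander a b).Reachable i j) :
    pathWeight a b i j = φ j - φ i := by
  obtain ⟨w⟩ := h
  have hpath : ∃ p : (meander a b).Walk i j, p.IsPath := ⟨w.bypass, w.bypass_isPath⟩
  rw [pathWeight, dif_pos hpath]
  exact walkWeight_eq_sub_of_potential φ hφ _

lemma blockPair_singleton_iff {n i j : ℕ} :
    blockPair [n] i j ↔ 0 < i ∧ 0 < j ∧ i ≠ j ∧ i + j = n + 1 := by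
  simp [blockPair]
  omega

lemma sameBlock_singleton_iff {n i j : ℕ} :
    sameBlock [n] i j ↔ 0 < i ∧ 0 < j ∧ i ≤ n ∧ j ≤ n := by
  simp [sameBlock]
  omega

def topComp (r : ℕ) : List ℕ := List.replicate r 2 ++ [1]

def botComp (r : ℕ) : List ℕ := [2 * r + 1]

lemma length_topComp (r : ℕ) : (topComp r).length = r + 1 := by simp [topComp]

lemma topComp_block {r k : ℕ} (hk : k ≤ r) :
    ((topComp r).take k).sum = 2 * k ∧ (topComp r).getD k 0 = if k < r then 2 else 1 := by
  refine ⟨by simp [topComp, List.take_append, hk, mul_comm], ?_⟩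
  rcases hk.lt_or_eq with h | rfl
  · have h' : k < (List.replicate r 2).length := by simpa using h
    simp [topComp, List.getElem?_append_left h', h]
  · simp [topComp]

lemma blockPair_topComp_iff {r i j : ℕ} :
    blockPair (topComp r) i j ↔
      0 < i ∧ 0 < j ∧ i ≠ j ∧ (i + 1) / 2 = (j + 1) / 2 ∧ i ≤ 2 * r ∧ j ≤ 2 * r := by
  rw [blockPair, length_topComp]
  constructor
  · rintro ⟨k, hk, h⟩
    rw [(topComp_block (by omega : k ≤ r)).1, (topComp_block (by omega : k ≤ r)).2] at h
    split_ifs at h <;> omega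
  · intro h
    have hk : (i - 1) / 2 ≤ r := by omega
    refine ⟨(i - 1) / 2, by omega, ?_⟩
    rw [(topComp_block hk).1, (topComp_block hk).2]
    split_ifs <;> omega

lemma sameBlock_topComp_iff {r i j : ℕ} :
    sameBlock (topComp r) i j ↔
      0 < i ∧ 0 < j ∧ (i + 1) / 2 = (j + 1) / 2 ∧ i ≤ 2 * r + 1 ∧ j ≤ 2 * r + 1 := by
  rw [sameBlock, length_topComp]
  constructor
  · rintro ⟨k, hk, h⟩
    rw [(topComp_block (by omega : k ≤ r)).1, (topComp_block (by omega : k ≤ r)).2] at h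
    split_ifs at h <;> omega
  · intro h
    have hk : (i - 1) / 2 ≤ r := by omega
    refine ⟨(i - 1) / 2, by omega, ?_⟩
    rw [(topComp_block hk).1, (topComp_block hk).2]
    split_ifs <;> omega

lemma seaweedPos_iff {r i j : ℕ} (hi : i ∈ Icc 1 (2 * r + 1)) (hj : j ∈ Icc 1 (2 * r + 1)) :
    seaweedPos (topComp r) (botComp r) i j ↔ i ≤ j ∨ (i = j + 1 ∧ j % 2 = 1) := by
  rw [mem_Icc] at hi hj
  rw [seaweedPos, botComp, sameBlock_topComp_iff, sameBlock_singleton_iff]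
  omega

def potential (r v : ℕ) : ℤ :=
  (if r + r % 2 < v then 1 else 0) - (if v % 2 = 0 then 1 else 0)

lemma potential_eq_add_one_of_dirEdge {r x y : ℕ} (h : dirEdge (topComp r) (botComp r) x y) :
    potential r y = potential r x + 1 := by
  rw [dirEdge, botComp, blockPair_topComp_iff, blockPair_singleton_iff] at h
  unfold potential
  split_ifs <;> omega

/-- The position of `v` along the meander path `1, 2, 2r, 2r-1, 3, 4, 2r-2, …`, with `2r+1`
attached to `1` by a bottom arc. -/
def pathRank (r v : ℕ) : ℕ :=
  if v = 2 * r + 1 then 1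
  else if v ≤ r + r % 2 then 2 * v - 2 - (v + 1) % 2
  else 4 * r + 1 + (v + 1) % 2 - 2 * v

lemma exists_adj_pathRank_lt {r v : ℕ} (h₂ : 2 ≤ v) (hv : v ≤ 2 * r + 1) :
    ∃ u ∈ Set.Icc 1 (2 * r + 1), (meander (topComp r) (botComp r)).Adj v u ∧
      pathRank r u < pathRank r v := by
  have hbot : v ≠ r + 1 → (meander (topComp r) (botComp r)).Adj v (2 * r + 2 - v) := by
    intro hne; right; rw [botComp, blockPair_singleton_iff]; omega
  have htop : ∀ u, (u + 1) / 2 = (v + 1) / 2 → u ≠ v → 0 < u → u ≤ 2 * r → v ≤ 2 * r →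
      (meander (topComp r) (botComp r)).Adj v u := by
    intro u hu hne hu0 hu2 hv2; left; rw [blockPair_topComp_iff]; omega
  by_cases hlast : v = 2 * r + 1
  · refine ⟨1, ⟨le_rfl, by omega⟩, ?_, by unfold pathRank; split_ifs <;> omega⟩
    simpa [hlast] using hbot (by omega)
  rcases Nat.even_or_odd' v with ⟨k, rfl | rfl⟩
  · by_cases hsmall : 2 * k ≤ r + r % 2
    · exact ⟨2 * k - 1, ⟨by omega, by omega⟩, htop _ (by omega) (by omega) (by omega) (by omega)
        (by omega), by unfold pathRank; split_ifs <;> omega⟩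
    · exact ⟨2 * r + 2 - 2 * k, ⟨by omega, by omega⟩, hbot (by omega),
        by unfold pathRank; split_ifs <;> omega⟩
  · by_cases hsmall : 2 * k + 1 ≤ r + r % 2
    · refine ⟨2 * r + 1 - 2 * k, ⟨by omega, by omega⟩, ?_, by unfold pathRank; split_ifs <;> omega⟩
      simpa [show 2 * r + 2 - (2 * k + 1) = 2 * r + 1 - 2 * k by omega] using hbot (by omega)
    · exact ⟨2 * k + 2, ⟨by omega, by omega⟩, htop _ (by omega) (by omega) (by omega) (by omega)
        (by omega), by unfold pathRank; split_ifs <;> omega⟩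

lemma meander_reachable {r i j : ℕ} (hi : i ∈ Icc 1 (2 * r + 1)) (hj : j ∈ Icc 1 (2 * r + 1)) :
    (meander (topComp r) (botComp r)).Reachable i j := by
  have h := (meander (topComp r) (botComp r)).reachable_of_exists_adj_lt (pathRank r)
    (Set.Icc 1 (2 * r + 1)) 1 fun v hv hv₁ => exists_adj_pathRank_lt (by grind) hv.2
  exact (h i (by simpa using hi)).symm.trans (h j (by simpa using hj))

lemma pathWeight_eq {r i j : ℕ} (hi : i ∈ Icc 1 (2 * r + 1)) (hj : j ∈ Icc 1 (2 * r + 1)) :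
    pathWeight (topComp r) (botComp r) i j = potential r j - potential r i :=
  pathWeight_eq_sub_of_potential _ (fun _ _ => potential_eq_add_one_of_dirEdge)
    (meander_reachable hi hj)

/-- The positions of the seaweed (see `seaweedPos_iff`) whose spectrum entry is `w`. -/
def weightSet (r : ℕ) (w : ℤ) : Finset (ℕ × ℕ) :=
  (Icc 1 (2 * r + 1) ×ˢ Icc 1 (2 * r + 1)).filter fun q =>
    (q.1 ≤ q.2 ∨ (q.1 = q.2 + 1 ∧ q.2 % 2 = 1)) ∧ potential r q.2 - potential r q.1 = w

lemma count_spectrumBlock (r : ℕ) (w : ℤ) :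
    (spectrumBlock (topComp r) (botComp r) (Icc 1 (topComp r).sum)
      (Icc 1 (topComp r).sum)).count w = #(weightSet r w) := by
  classical
  have hsum : (topComp r).sum = 2 * r + 1 := by simp [topComp, mul_comm]
  rw [spectrumBlock, hsum, Multiset.count_map, ← Finset.filter_val, Finset.filter_filter,
    Finset.card_val, weightSet]
  congr 1
  refine Finset.filter_congr fun q hq => ?_
  rw [mem_product] at hq
  rw [seaweedPos_iff hq.1 hq.2, pathWeight_eq hq.1 hq.2]
  exact and_congr_right' eq_comm

lemma mem_weightSet {r : ℕ} {w : ℤ} {q : ℕ × ℕ} :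
    q ∈ weightSet r w ↔ (0 < q.1 ∧ q.1 ≤ 2 * r + 1 ∧ 0 < q.2 ∧ q.2 ≤ 2 * r + 1) ∧
      (q.1 ≤ q.2 ∨ (q.1 = q.2 + 1 ∧ q.2 % 2 = 1)) ∧ potential r q.2 - potential r q.1 = w := by
  simp only [weightSet, mem_filter, mem_product, mem_Icc]
  omega

lemma mem_weightSet_neg_one {r : ℕ} {q : ℕ × ℕ} :
    q ∈ weightSet r (-1) ↔ 0 < q.1 ∧ q.1 % 2 = 1 ∧ q.1 < q.2 ∧ q.2 % 2 = 0 ∧ q.2 ≤ 2 * r + 1 ∧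
      (q.2 ≤ r + r % 2 ∨ r + r % 2 < q.1) := by
  rw [mem_weightSet]; unfold potential; split_ifs <;> omega

lemma mem_weightSet_zero {r : ℕ} {q : ℕ × ℕ} :
    q ∈ weightSet r 0 ↔ 0 < q.1 ∧ q.1 ≤ q.2 ∧ q.2 ≤ 2 * r + 1 ∧
      (q.1 % 2 = q.2 % 2 ∧ (q.2 ≤ r + r % 2 ∨ r + r % 2 < q.1) ∨
        q.1 % 2 = 1 ∧ q.2 % 2 = 0 ∧ q.1 ≤ r + r % 2 ∧ r + r % 2 < q.2) := by
  rw [mem_weightSet]; unfold potential; split_ifs <;> omega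

lemma mem_weightSet_one {r : ℕ} {q : ℕ × ℕ} :
    q ∈ weightSet r 1 ↔ 0 < q.2 ∧ q.1 ≤ 2 * r + 1 ∧ (q.1 = q.2 + 1 ∧ q.2 % 2 = 1 ∨
      0 < q.1 ∧ q.1 < q.2 ∧ q.2 ≤ 2 * r + 1 ∧
        (q.1 % 2 = 0 ∧ q.2 % 2 = 1 ∧ (q.2 ≤ r + r % 2 ∨ r + r % 2 < q.1) ∨
          q.1 % 2 = q.2 % 2 ∧ q.1 ≤ r + r % 2 ∧ r + r % 2 < q.2)) := by
  rw [mem_weightSet]; unfold potential; split_ifs <;> omega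

lemma mem_weightSet_two {r : ℕ} {q : ℕ × ℕ} :
    q ∈ weightSet r 2 ↔ 0 < q.1 ∧ q.1 % 2 = 0 ∧ q.1 ≤ r + r % 2 ∧
      r + r % 2 < q.2 ∧ q.2 % 2 = 1 ∧ q.2 ≤ 2 * r + 1 := by
  rw [mem_weightSet]; unfold potential; split_ifs <;> omega

lemma weightSet_eq_empty {r : ℕ} {w : ℤ} (hw : w ∉ Icc (-1) 2) : weightSet r w = ∅ := by
  ext q
  simp only [mem_weightSet, notMem_empty, iff_false]
  rw [mem_Icc] at hw
  unfold potential
  split_ifs <;> omega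

/-- The weight-`2` positions form the rectangle (even `i ≤ c`) × (odd `j > c`); cut along its
diagonal, it becomes the weight-`-1` pairs (odd `i` < even `j`) on either side of `c`. -/
lemma card_weightSet_neg_one (r : ℕ) : #(weightSet r (-1)) = #(weightSet r 2) := by
  refine card_nbij'
    (fun q => if q.2 ≤ r + r % 2 then (q.2, q.1 + (r + r % 2))
      else (q.1 - (r + r % 2) + 1, q.2 + 1))
    (fun q => if q.2 ≤ q.1 + (r + r % 2) - 1 then (q.2 - (r + r % 2), q.1)
      else (r + r % 2 + q.1 - 1, q.2 - 1)) ?_ ?_ ?_ ?_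
  all_goals
    rintro ⟨i, j⟩ h
    simp only [mem_coe, mem_weightSet_two, mem_weightSet_neg_one] at h ⊢
    split_ifs <;> simp only [Prod.mk.injEq, and_true, true_and] at * <;> omega

/-- Moving an even `i` to `i - 1` matches the weight-`1` positions with even `i` with the
weight-`0` ones with odd `i < j`, and `(j + 1, j)` goes to `(j, j)`. The remaining weight-`1`
rectangle (odd `i ≤ c`) × (odd `j > c`) is cut along its diagonal as in
`card_weightSet_neg_one`, onto the even–even weight-`0` pairs. Only `(2r+1, 2r+1)` is missed. -/
lemma card_weightSet_zero (r : ℕ) : #(weightSet r 0) = #(weightSet r 1) + 1 := by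
  have hlast : (2 * r + 1, 2 * r + 1) ∈ weightSet r 0 := by rw [mem_weightSet_zero]; omega
  rw [← card_erase_add_one hlast]
  congr 1
  refine card_nbij'
    (fun q => if q.1 % 2 = 0 then
        (if q.2 ≤ r + r % 2 then (q.2 - 1, q.1 + (r + r % 2) - 1)
          else (q.1 - (r + r % 2) - 1, q.2 + 1))
      else if q.1 = q.2 then (q.1 + 1, q.1) else (q.1 + 1, q.2))
    (fun q => if q.2 < q.1 then (q.2, q.2) else if q.1 % 2 = 0 then (q.1 - 1, q.2)
      else if q.2 ≤ q.1 + (r + r % 2) then (q.2 - (r + r % 2) + 1, q.1 + 1)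
      else (q.1 + (r + r % 2) + 1, q.2 - 1)) ?_ ?_ ?_ ?_
  all_goals
    rintro ⟨i, j⟩ h
    simp only [mem_coe, mem_erase, ne_eq, mem_weightSet_zero, mem_weightSet_one] at h ⊢
    split_ifs <;> simp only [Prod.mk.injEq, and_true, true_and] at * <;> omega

lemma card_weightSet_two_pos {r : ℕ} (hr : 1 ≤ r) : 0 < #(weightSet r 2) :=
  card_pos.2 ⟨(2, 2 * r + 1), by rw [mem_weightSet_two]; omega⟩

lemma card_weightSet_two_lt_one {r : ℕ} (hr : 1 ≤ r) : #(weightSet r 2) < #(weightSet r 1) := by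
  have hsub : (2, 1) ∈ weightSet r 1 := by rw [mem_weightSet_one]; omega
  rw [← card_erase_add_one hsub, Nat.lt_succ_iff]
  refine card_le_card_of_injOn (fun q => (q.1 - 1, q.2)) ?_ ?_
  · rintro ⟨i, j⟩ h
    simp only [mem_coe, mem_erase, ne_eq, mem_weightSet_two, mem_weightSet_one,
      Prod.mk.injEq] at h ⊢
    omega
  · rintro ⟨i, j⟩ h ⟨i', j'⟩ h' heq
    simp only [mem_coe, mem_weightSet_two, Prod.mk.injEq] at h h' heq ⊢
    omega

lemma spectrum_eq_s19 (r : ℕ) :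
    spectrum (topComp r) (botComp r) =
      Multiset.replicate #(weightSet r 2) (-1) + Multiset.replicate #(weightSet r 1) 0 +
        Multiset.replicate #(weightSet r 1) 1 + Multiset.replicate #(weightSet r 2) 2 := by
  ext w
  rw [spectrum, Multiset.count_sub, count_spectrumBlock]
  simp only [Multiset.count_add, Multiset.count_replicate, Multiset.count_singleton]
  by_cases hw : w ∈ Icc (-1) 2
  · rw [mem_Icc] at hw
    obtain rfl | rfl | rfl | rfl : w = -1 ∨ w = 0 ∨ w = 1 ∨ w = 2 := by omega
    · simp [card_weightSet_neg_one]
    · simp [card_weightSet_zero]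
    · simp
    · simp
  · rw [weightSet_eq_empty hw, card_empty]
    rw [mem_Icc] at hw
    split_ifs <;> omega

lemma hasLogConcaveSpectrum_replicate {a b : ℕ} (hb : 0 < b) (hba : b ≤ a) :
    HasLogConcaveSpectrum (Multiset.replicate b (-1) + Multiset.replicate a 0 +
      Multiset.replicate a 1 + Multiset.replicate b 2) := by
  have hsupp : (Multiset.replicate b (-1) + Multiset.replicate a 0 +
      Multiset.replicate a 1 + Multiset.replicate b 2).toFinset = [-1, 0, 1, 2].toFinset := by
    ext x
    simp only [Multiset.mem_toFinset, Multiset.mem_add, Multiset.mem_replicate, List.mem_toFinset,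
      List.mem_cons, List.not_mem_nil, or_false]
    omega
  have hsort : sort ([-1, 0, 1, 2] : List ℤ).toFinset = [-1, 0, 1, 2] :=
    (List.toFinset_sort _ (by decide)).2 (by decide)
  intro i hi hlen
  rw [hsupp, hsort] at hlen ⊢
  obtain rfl | rfl : i = 1 ∨ i = 2 := by
    simp only [List.length_cons, List.length_nil] at hlen; omega
  · simpa [Multiset.count_replicate, sq] using Nat.mul_le_mul_right a hba
  · simpa [Multiset.count_replicate, sq] using Nat.mul_le_mul_left a hba

/-- For `r ≥ 1` and `g_r = p^A(2|…|2|1 / 2r+1)` (with `r` parts equal to `2`), there are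
positive integers `a_r > b_r` such that the spectrum of `g_r` is
`{-1^{b_r}, 0^{a_r}, 1^{a_r}, 2^{b_r}}`; in particular `g_r` has the log-concave
spectrum property. -/
theorem statement19 (r : ℕ) (hr : 1 ≤ r) :
    (∃ ar br : ℕ, 0 < br ∧ br < ar ∧
      spectrum (List.replicate r 2 ++ [1]) [2 * r + 1]
        = Multiset.replicate br (-1 : ℤ) + Multiset.replicate ar (0 : ℤ) +
            Multiset.replicate ar (1 : ℤ) + Multiset.replicate br (2 : ℤ)) ∧
    HasLogConcaveSpectrum (spectrum (List.replicate r 2 ++ [1]) [2 * r + 1]) := by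
  have hspec : spectrum (List.replicate r 2 ++ [1]) [2 * r + 1] = _ := spectrum_eq_s19 r
  have hb := card_weightSet_two_pos hr
  have hba := card_weightSet_two_lt_one hr
  refine ⟨⟨_, _, hb, hba, hspec⟩, ?_⟩
  rw [hspec]
  exact hasLogConcaveSpectrum_replicate hb hba.le

end Seaweed
end
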